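/- Let μ and ν be Borel probability measures on M with φ-barycenters x and y respectively, and let W₁(μ,ν) denote the supremum of |∫ f dμ − ∫ f dν| over all 1-Lipschitz functions f : M → ℝ. Then |W₁(μ,ν) − dist(x,y)| ≤ 2β·(√(η(μ)) + √(η(ν))). (This is Proposition 'statesarepoints' with the uniform constant made explicit: the Kantorovich–Rubinstein distance between localized states is close to the geodesic distance between their barycenters, up to an error controlled by the square roots of the dispersions.) -/

import Mathlib

/-!
Both directions come from the triangle inequality through the barycenters. Any 1-Lipschitz `f`
satisfies `|∫ f dμ - f x| ≤ ∫ dist x · dμ`, which bounds the supremum from above by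
`dist x y + ∫ dist x · dμ + ∫ dist y · dν`; the test function `dist · y` bounds it from below
by `dist x y - ∫ dist x · dμ - ∫ dist y · dν`. Since `x` minimizes `‖φ · - b(μ)‖`, the
co-Lipschitz bound gives `dist x z ≤ 2β ‖φ z - b(μ)‖`, and Cauchy–Schwarz turns the mean of
the latter into `2β √η(μ)`.
-/

open MeasureTheory

theorem Continuous.integrable_of_compactSpace {X E : Type*} [TopologicalSpace X] [CompactSpace X]
    [MeasurableSpace X] [OpensMeasurableSpace X] [NormedAddCommGroup E] {μ : Measure X}
    [IsFiniteMeasure μ] {f : X → E} (hf : Continuous f) : Integrable f μ :=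
  hf.integrable_of_hasCompactSupport (.of_compactSpace f)

section FirstMoment

variable {Ω : Type*} [MeasurableSpace Ω] (μ : Measure Ω) [IsProbabilityMeasure μ]

theorem integral_le_sqrt_integral_sq {g : Ω → ℝ} (hg : MemLp g 2 μ) :
    ∫ z, g z ∂μ ≤ √(∫ z, g z ^ 2 ∂μ) := by
  have hsq : (∫ z, g z ∂μ) ^ 2 ≤ ∫ z, g z ^ 2 ∂μ := by
    have hvar := ProbabilityTheory.variance_nonneg g μ
    rw [ProbabilityTheory.variance_eq_sub hg] at hvar
    simp only [Pi.pow_apply] at hvar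
    linarith
  calc ∫ z, g z ∂μ ≤ |∫ z, g z ∂μ| := le_abs_self _
    _ = √((∫ z, g z ∂μ) ^ 2) := (Real.sqrt_sq_eq_abs _).symm
    _ ≤ √(∫ z, g z ^ 2 ∂μ) := Real.sqrt_le_sqrt hsq

end FirstMoment

section CoLipschitz

variable {M E : Type*} [MetricSpace M] [NormedAddCommGroup E] {φ : M → E} {β : ℝ}

theorem dist_le_two_mul_norm_sub_of_minimizer (hβ : 0 ≤ β)
    (hco : ∀ x y : M, dist x y ≤ β * ‖φ x - φ y‖) {b : E} {x : M}
    (hx : ∀ z : M, ‖φ x - b‖ ≤ ‖φ z - b‖) (z : M) :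
    dist x z ≤ 2 * β * ‖φ z - b‖ :=
  calc dist x z ≤ β * ‖φ x - φ z‖ := hco x z
    _ ≤ β * (‖φ x - b‖ + ‖φ z - b‖) := by
        gcongr; simpa only [dist_eq_norm] using dist_triangle_right (φ x) (φ z) b
    _ ≤ β * (‖φ z - b‖ + ‖φ z - b‖) := by gcongr; exact hx z
    _ = 2 * β * ‖φ z - b‖ := by ring

variable [CompactSpace M] [MeasurableSpace M] [BorelSpace M] (μ : Measure M)
  [IsProbabilityMeasure μ]

theorem integral_dist_le_of_minimizer (hφ : Continuous φ) (hβ : 0 ≤ β)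
    (hco : ∀ x y : M, dist x y ≤ β * ‖φ x - φ y‖) {b : E} {x : M}
    (hx : ∀ z : M, ‖φ x - b‖ ≤ ‖φ z - b‖) :
    ∫ z, dist x z ∂μ ≤ 2 * β * √(∫ z, ‖φ z - b‖ ^ 2 ∂μ) := by
  have hcont : Continuous fun z => ‖φ z - b‖ := (hφ.sub continuous_const).norm
  calc ∫ z, dist x z ∂μ ≤ ∫ z, 2 * β * ‖φ z - b‖ ∂μ :=
        integral_mono
          (continuous_const.dist continuous_id).integrable_of_compactSpace
          (continuous_const.mul hcont).integrable_of_compactSpace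
          (dist_le_two_mul_norm_sub_of_minimizer hβ hco hx)
    _ = 2 * β * ∫ z, ‖φ z - b‖ ∂μ := integral_const_mul _ _
    _ ≤ 2 * β * √(∫ z, ‖φ z - b‖ ^ 2 ∂μ) := by
        gcongr
        exact integral_le_sqrt_integral_sq μ (hcont.memLp_of_hasCompactSupport (.of_compactSpace _))

end CoLipschitz

section Duality

variable {M : Type*} [MetricSpace M] [CompactSpace M] [MeasurableSpace M] [BorelSpace M]
  (μ ν : Measure M) [IsProbabilityMeasure μ] [IsProbabilityMeasure ν]

theorem LipschitzWith.abs_integral_sub_le {K : NNReal} {f : M → ℝ} (hf : LipschitzWith K f)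
    (x : M) : |∫ z, f z ∂μ - f x| ≤ K * ∫ z, dist x z ∂μ := by
  have hint : Integrable f μ := hf.continuous.integrable_of_compactSpace
  calc |∫ z, f z ∂μ - f x| = |∫ z, (f z - f x) ∂μ| := by
        rw [integral_sub hint (integrable_const _), integral_const, probReal_univ, one_smul]
    _ ≤ ∫ z, |f z - f x| ∂μ := abs_integral_le_integral_abs
    _ ≤ ∫ z, K * dist x z ∂μ :=
        integral_mono (hint.sub (integrable_const _)).abs
          (continuous_const.mul (continuous_const.dist continuous_id)).integrable_of_compactSpace
          fun z => by rw [← Real.dist_eq, dist_comm x]; exact hf.dist_le_mul z x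
    _ = K * ∫ z, dist x z ∂μ := integral_const_mul _ _

theorem LipschitzWith.abs_integral_sub_integral_le {f : M → ℝ} (hf : LipschitzWith 1 f)
    (x y : M) :
    |∫ z, f z ∂μ - ∫ z, f z ∂ν| ≤ dist x y + (∫ z, dist x z ∂μ + ∫ z, dist y z ∂ν) := by
  have hμ := hf.abs_integral_sub_le μ x
  have hν := hf.abs_integral_sub_le ν y
  have hxy : |f x - f y| ≤ dist x y := by simpa [Real.dist_eq] using hf.dist_le_mul x y
  rw [NNReal.coe_one, one_mul] at hμ hν
  rw [abs_le] at hμ hν hxy ⊢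
  constructor <;> linarith

noncomputable def kantorovichRubinsteinDist : ℝ :=
  sSup {r : ℝ | ∃ f : M → ℝ, LipschitzWith 1 f ∧ r = |(∫ z, f z ∂μ) - ∫ z, f z ∂ν|}

theorem dist_add_integral_dist_mem_upperBounds (x y : M) :
    dist x y + (∫ z, dist x z ∂μ + ∫ z, dist y z ∂ν) ∈
      upperBounds {r : ℝ | ∃ f : M → ℝ, LipschitzWith 1 f ∧ r = |(∫ z, f z ∂μ) - ∫ z, f z ∂ν|} := by
  rintro _ ⟨f, hf, rfl⟩
  exact hf.abs_integral_sub_integral_le μ ν x y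

theorem kantorovichRubinsteinDist_le (x y : M) :
    kantorovichRubinsteinDist μ ν ≤ dist x y + (∫ z, dist x z ∂μ + ∫ z, dist y z ∂ν) :=
  csSup_le ⟨_, fun _ => 0, (LipschitzWith.const 0).weaken zero_le_one, rfl⟩
    (dist_add_integral_dist_mem_upperBounds μ ν x y)

theorem dist_sub_le_kantorovichRubinsteinDist (x y : M) :
    dist x y - (∫ z, dist x z ∂μ + ∫ z, dist y z ∂ν) ≤ kantorovichRubinsteinDist μ ν := by
  have hf : LipschitzWith 1 (dist · y) := LipschitzWith.dist_left y
  have htest := le_csSup ⟨_, dist_add_integral_dist_mem_upperBounds μ ν x y⟩ ⟨_, hf, rfl⟩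
  have hμ := hf.abs_integral_sub_le μ x
  have hν := hf.abs_integral_sub_le ν y
  simp only [dist_self, sub_zero, NNReal.coe_one, one_mul] at hμ hν
  rw [abs_le] at hμ hν
  have := le_abs_self (∫ z, dist z y ∂μ - ∫ z, dist z y ∂ν)
  unfold kantorovichRubinsteinDist
  linarith

theorem abs_kantorovichRubinsteinDist_sub_dist_le (x y : M) :
    |kantorovichRubinsteinDist μ ν - dist x y| ≤ ∫ z, dist x z ∂μ + ∫ z, dist y z ∂ν :=
  abs_sub_le_iff.2 ⟨by linarith [kantorovichRubinsteinDist_le μ ν x y],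
    by linarith [dist_sub_le_kantorovichRubinsteinDist μ ν x y]⟩

end Duality

theorem states_are_points_general
    {M : Type*} [MetricSpace M] [CompactSpace M] [MeasurableSpace M] [BorelSpace M]
    (μ ν : Measure M) [IsProbabilityMeasure μ] [IsProbabilityMeasure ν]
    (n : ℕ) (φ : M → EuclideanSpace ℝ (Fin n)) (hφ : Continuous φ)
    (β : ℝ) (hβ : 0 < β)
    (hco : ∀ x y : M, dist x y ≤ β * ‖φ x - φ y‖)
    (x y : M)
    (hx : ∀ z : M, ‖φ x - ∫ w, φ w ∂μ‖ ≤ ‖φ z - ∫ w, φ w ∂μ‖)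
    (hy : ∀ z : M, ‖φ y - ∫ w, φ w ∂ν‖ ≤ ‖φ z - ∫ w, φ w ∂ν‖) :
    |sSup {r : ℝ | ∃ f : M → ℝ, LipschitzWith 1 f ∧ r = |(∫ z, f z ∂μ) - ∫ z, f z ∂ν|}
        - dist x y| ≤
      2 * β * (Real.sqrt (∫ z, ‖φ z - ∫ w, φ w ∂μ‖ ^ 2 ∂μ)
        + Real.sqrt (∫ z, ‖φ z - ∫ w, φ w ∂ν‖ ^ 2 ∂ν)) := by
  have hμ := integral_dist_le_of_minimizer μ hφ hβ.le hco hx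
  have hν := integral_dist_le_of_minimizer ν hφ hβ.le hco hy
  calc _ = |kantorovichRubinsteinDist μ ν - dist x y| := rfl
    _ ≤ ∫ z, dist x z ∂μ + ∫ z, dist y z ∂ν := abs_kantorovichRubinsteinDist_sub_dist_le μ ν x y
    _ ≤ _ := by rw [mul_add]; exact add_le_add hμ hν

/-- Proposition `statesarepoints` with explicit constant: the Kantorovich–Rubinstein
distance (in dual form) between two localized states differs from the distance
between their φ-barycenters by at most `2β(√η(μ) + √η(ν))`. -/
theorem states_are_points
    {M : Type*} [MetricSpace M] [CompactSpace M] [MeasurableSpace M] [BorelSpace M]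
    (μ ν : Measure M) [IsProbabilityMeasure μ] [IsProbabilityMeasure ν]
    (n : ℕ) (hn : 1 ≤ n) (φ : M → EuclideanSpace ℝ (Fin n)) (hφ : Continuous φ)
    (β : ℝ) (hβ : 0 < β)
    (hco : ∀ x y : M, dist x y ≤ β * ‖φ x - φ y‖)
    (x y : M)
    (hx : ∀ z : M, ‖φ x - ∫ w, φ w ∂μ‖ ≤ ‖φ z - ∫ w, φ w ∂μ‖)
    (hy : ∀ z : M, ‖φ y - ∫ w, φ w ∂ν‖ ≤ ‖φ z - ∫ w, φ w ∂ν‖) :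
    |sSup {r : ℝ | ∃ f : M → ℝ, LipschitzWith 1 f ∧ r = |(∫ z, f z ∂μ) - ∫ z, f z ∂ν|}
        - dist x y| ≤
      2 * β * (Real.sqrt (∫ z, ‖φ z - ∫ w, φ w ∂μ‖ ^ 2 ∂μ)
        + Real.sqrt (∫ z, ‖φ z - ∫ w, φ w ∂ν‖ ^ 2 ∂ν)) :=
  states_are_points_general μ ν n φ hφ β hβ hco x y hx hy
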